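/- As c → 0⁺, the function β(c) = 2(2+c)·arcosh(c/2+1) - 2·√(c²+4c) satisfies β(c)/c^(3/2) → 4/3; in particular β(c) = O(c^(3/2)). -/

import Mathlib

open Filter

noncomputable def arcosh (x : ℝ) : ℝ := Real.log (x + Real.sqrt (x^2 - 1))

noncomputable def β (c : ℝ) : ℝ :=
  2*(2+c) * arcosh (c/2 + 1) - 2 * Real.sqrt (c^2 + 4*c)

lemma log_slope : Tendsto (fun y : ℝ => Real.log (1 + y) / y) (nhdsWithin 0 {(0:ℝ)}ᶜ) (nhds 1) := by
  have h := Real.hasDerivAt_log one_ne_zero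
  rw [hasDerivAt_iff_tendsto_slope] at h
  have hmap : Tendsto (fun y : ℝ => 1 + y) (nhdsWithin 0 {(0:ℝ)}ᶜ) (nhdsWithin 1 {(1:ℝ)}ᶜ) := by
    apply tendsto_nhdsWithin_of_tendsto_nhds_of_eventually_within
    · have : Tendsto (fun y : ℝ => 1 + y) (nhds 0) (nhds 1) := by
        simpa using (continuous_add_left (1:ℝ)).tendsto (0:ℝ)
      exact this.mono_left nhdsWithin_le_nhds
    · filter_upwards [self_mem_nhdsWithin] with y hy
      simp only [Set.mem_compl_iff, Set.mem_singleton_iff] at hy ⊢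
      intro h; exact hy (by linarith)
  have h2 := h.comp hmap
  norm_num at h2
  refine h2.congr fun y => ?_
  simp [slope_def_field, Real.log_one, div_eq_div_iff]

lemma arcosh_ratio : Tendsto (fun c : ℝ => arcosh (c/2 + 1) / Real.sqrt c)
    (nhdsWithin 0 (Set.Ioi 0)) (nhds 1) := by
  set y : ℝ → ℝ := fun c => c/2 + Real.sqrt ((c/2+1)^2 - 1) with hy
  have hypos : ∀ c ∈ Set.Ioi (0:ℝ), 0 < y c := by
    intro c hc
    have : (0:ℝ) < c/2 := by simpa using (half_pos (Set.mem_Ioi.mp hc))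
    have := Real.sqrt_nonneg ((c/2+1)^2 - 1)
    simp only [hy]; linarith
  have hy0 : Tendsto y (nhdsWithin 0 (Set.Ioi 0)) (nhdsWithin 0 {(0:ℝ)}ᶜ) := by
    apply tendsto_nhdsWithin_of_tendsto_nhds_of_eventually_within
    · have hc : ContinuousAt y 0 := by
        apply ContinuousAt.add (by fun_prop)
        exact (Real.continuous_sqrt.continuousAt).comp (by fun_prop)
      have h00 : y 0 = 0 := by simp [hy]
      have := hc.continuousWithinAt (s := Set.Ioi (0:ℝ))
      simpa [h00] using this.tendsto
    · filter_upwards [self_mem_nhdsWithin] with c hc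
      exact ne_of_gt (hypos c hc)
  have h1 : Tendsto (fun c => Real.log (1 + y c) / y c) (nhdsWithin 0 (Set.Ioi 0)) (nhds 1) :=
    log_slope.comp hy0
  have h2 : Tendsto (fun c => y c / Real.sqrt c) (nhdsWithin 0 (Set.Ioi 0)) (nhds 1) := by
    have hcont : Tendsto (fun c : ℝ => Real.sqrt c / 2 + Real.sqrt (c/4 + 1))
        (nhdsWithin 0 (Set.Ioi 0)) (nhds 1) := by
      have hc : ContinuousAt (fun c : ℝ => Real.sqrt c / 2 + Real.sqrt (c/4 + 1)) 0 := by
        fun_prop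
      have h0 : Real.sqrt 0 / 2 + Real.sqrt ((0:ℝ)/4 + 1) = 1 := by
        norm_num
      have := hc.continuousWithinAt (s := Set.Ioi 0)
      simpa [h0] using this.tendsto
    refine hcont.congr' ?_
    filter_upwards [self_mem_nhdsWithin] with c hc
    have hc0 : (0:ℝ) < c := hc
    have hsc : Real.sqrt c ≠ 0 := ne_of_gt (Real.sqrt_pos.mpr hc0)
    have harg : (c/2+1)^2 - 1 = c * (c/4 + 1) := by ring
    have hsqrt : Real.sqrt ((c/2+1)^2 - 1) = Real.sqrt c * Real.sqrt (c/4+1) := by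
      rw [harg, Real.sqrt_mul hc0.le]
    have hcs : Real.sqrt c * Real.sqrt c = c := Real.mul_self_sqrt hc0.le
    simp only [hy, hsqrt]
    rw [eq_div_iff hsc]
    linear_combination hcs / 2
  have := h1.mul h2
  norm_num at this
  refine this.congr' ?_
  filter_upwards [self_mem_nhdsWithin] with c hc
  have hyne : y c ≠ 0 := ne_of_gt (hypos c hc)
  have : arcosh (c/2+1) = Real.log (1 + y c) := by
    simp only [arcosh, hy]; ring_nf
  rw [this]
  field_simp

lemma beta_deriv : ∀ c ∈ Set.Ioi (0:ℝ), HasDerivAt β (2 * arcosh (c/2 + 1)) c := by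
  intro c hc
  have hc0 : (0:ℝ) < c := hc
  set s : ℝ := Real.sqrt ((c/2+1)^2 - 1) with hs
  have hargpos : (0:ℝ) < (c/2+1)^2 - 1 := by nlinarith
  have hspos : 0 < s := Real.sqrt_pos.mpr hargpos
  have hs2 : s^2 = (c/2+1)^2 - 1 := Real.sq_sqrt hargpos.le
  -- derivative of inner c ↦ (c/2+1)^2 - 1
  have hlin : HasDerivAt (fun x : ℝ => x/2 + 1) (1/2) c := by
    simpa using ((hasDerivAt_id c).div_const 2).add_const 1
  have hinner : HasDerivAt (fun x : ℝ => (x/2+1)^2 - 1) (c/2 + 1) c := by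
    have := (hlin.pow 2).sub_const 1
    refine this.congr_deriv ?_
    push_cast; ring
  have hsqrt : HasDerivAt (fun x : ℝ => Real.sqrt ((x/2+1)^2 - 1)) ((c/2+1) / (2*s)) c :=
    hinner.sqrt (ne_of_gt hargpos)
  have hu : HasDerivAt (fun x : ℝ => (x/2+1) + Real.sqrt ((x/2+1)^2 - 1))
      (1/2 + (c/2+1)/(2*s)) c := hlin.add hsqrt
  have hupos : (0:ℝ) < (c/2+1) + s := by positivity
  have hA : HasDerivAt (fun x : ℝ => arcosh (x/2 + 1)) (1/(2*s)) c := by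
    have := hu.log (ne_of_gt hupos)
    have heq : (1/2 + (c/2+1)/(2*s)) / ((c/2+1) + s) = 1/(2*s) := by
      rw [div_eq_div_iff (by positivity) (by positivity)]
      field_simp
      ring
    simp only [arcosh]
    convert this using 1
    exact heq.symm
  have hsq2 : Real.sqrt (c^2 + 4*c) = 2 * s := by
    have : c^2 + 4*c = (2*s)^2 := by nlinarith
    rw [this, Real.sqrt_sq (by positivity)]
  have hv : HasDerivAt (fun x : ℝ => x^2 + 4*x) (2*c + 4) c := by
    have := ((hasDerivAt_pow 2 c).add ((hasDerivAt_id c).const_mul 4))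
    refine this.congr_deriv ?_ <;> push_cast <;> ring
  have hsqrt2 : HasDerivAt (fun x : ℝ => Real.sqrt (x^2 + 4*x)) ((2*c+4)/(2*(2*s))) c := by
    have := hv.sqrt (by nlinarith [hsq2, hspos])
    rw [hsq2] at this
    exact this
  have hβ : HasDerivAt β
      ((2*(2+c)) * (1/(2*s)) + 2 * arcosh (c/2+1) - 2 * ((2*c+4)/(2*(2*s)))) c := by
    have h1 : HasDerivAt (fun x : ℝ => 2*(2+x)) 2 c := by
      simpa using ((hasDerivAt_id c).const_add 2).const_mul 2
    have h2 := (h1.mul hA).sub (hsqrt2.const_mul 2)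
    refine h2.congr_deriv ?_
    ring
  convert hβ using 1
  field_simp
  ring

theorem beta_asymptotics :
    Tendsto (fun c : ℝ => β c / c ^ ((3:ℝ)/2)) (nhdsWithin 0 (Set.Ioi 0))
      (nhds (4/3)) := by
  apply HasDerivAt.lhopital_zero_nhdsGT
      (f' := fun c => 2 * arcosh (c/2 + 1)) (g' := fun c => (3/2) * c ^ ((3:ℝ)/2 - 1))
  · filter_upwards [self_mem_nhdsWithin] with c hc
    exact beta_deriv c hc
  · filter_upwards [self_mem_nhdsWithin] with c hc
    exact Real.hasDerivAt_rpow_const (Or.inl (ne_of_gt hc))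
  · filter_upwards [self_mem_nhdsWithin] with c hc
    have hc0 : (0:ℝ) < c := hc
    have : (0:ℝ) < c ^ ((3:ℝ)/2 - 1) := Real.rpow_pos_of_pos hc0 _
    positivity
  · -- β → 0
    have hcont : ContinuousAt β 0 := by
      have hinner : ContinuousAt (fun c : ℝ => (c/2+1) + Real.sqrt ((c/2+1)^2 - 1)) 0 := by
        fun_prop
      have hval : ((fun c : ℝ => (c/2+1) + Real.sqrt ((c/2+1)^2 - 1)) 0) = 1 := by norm_num
      have hlog : ContinuousAt Real.log
          ((fun c : ℝ => (c/2+1) + Real.sqrt ((c/2+1)^2 - 1)) 0) := by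
        rw [hval]; exact Real.continuousAt_log one_ne_zero
      have hA : ContinuousAt (fun c : ℝ => arcosh (c/2+1)) 0 := by
        simp only [arcosh]
        show ContinuousAt (Real.log ∘ (fun c : ℝ => (c/2+1) + Real.sqrt ((c/2+1)^2 - 1))) 0
        exact ContinuousAt.comp (g := Real.log)
          (f := fun c : ℝ => (c/2+1) + Real.sqrt ((c/2+1)^2 - 1)) (x := 0) hlog hinner
      apply ContinuousAt.sub
      · exact (by fun_prop : ContinuousAt (fun c : ℝ => 2*(2+c)) 0).mul hA
      · fun_prop
    have hβ0 : β 0 = 0 := by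
      simp [β, arcosh]
    have := hcont.continuousWithinAt (s := Set.Ioi (0:ℝ))
    simpa [hβ0] using this.tendsto
  · have := (Real.continuousAt_rpow_const 0 ((3:ℝ)/2) (Or.inr (by norm_num))).continuousWithinAt
        (s := Set.Ioi (0:ℝ))
    have h0 : (0:ℝ) ^ ((3:ℝ)/2) = 0 := Real.zero_rpow (by norm_num)
    simpa [h0] using this.tendsto
  · have := arcosh_ratio.const_mul ((4:ℝ)/3)
    norm_num at this
    refine this.congr' ?_
    filter_upwards [self_mem_nhdsWithin] with c hc
    have hc0 : (0:ℝ) < c := hc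
    have hrw : c ^ ((3:ℝ)/2 - 1) = Real.sqrt c := by
      rw [show (3:ℝ)/2 - 1 = 1/2 by norm_num, ← Real.sqrt_eq_rpow]
    have hsc : Real.sqrt c ≠ 0 := ne_of_gt (Real.sqrt_pos.mpr hc0)
    rw [hrw]
    field_simp
    ring
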